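/- Suppose the decomposition is C_A-stable. Then for every g ∈ ℝ^N, with s_i = −I_i A_i⁻¹ R_i g, one has ‖g‖_{A⁻¹}² ≤ C_A Σ_{i=1}^J ‖s_i‖_{A_i}². -/

import Mathlib

open Matrix

/-- If the decomposition is `C_A`-stable, then for every `g`, with `s_i = −I_i A_i⁻¹ R_i g`,
one has `‖g‖_{A⁻¹}² ≤ C_A ∑ ‖s_i‖_{A_i}²`. -/
theorem gradient_norm_le_stable {N J : ℕ}
    (A : Matrix (Fin N) (Fin N) ℝ) (hA : A.PosDef)
    (V : Fin J → Submodule ℝ (Fin N → ℝ)) (hV : (⨆ i, V i) = ⊤)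
    (Ai : ∀ i, V i →ₗ[ℝ] V i)
    (hAisym : ∀ i (u v : V i),
      (Ai i u : Fin N → ℝ) ⬝ᵥ (v : Fin N → ℝ) = (u : Fin N → ℝ) ⬝ᵥ (Ai i v : Fin N → ℝ))
    (hAipos : ∀ i (v : V i), v ≠ 0 → 0 < (Ai i v : Fin N → ℝ) ⬝ᵥ (v : Fin N → ℝ))
    -- `AiInv i` is the inverse of `A_i`
    (AiInv : ∀ i, V i →ₗ[ℝ] V i)
    (hAiInv : ∀ i (v : V i), Ai i (AiInv i v) = v ∧ AiInv i (Ai i v) = v)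
    -- `R i = I_iᵀ` is the adjoint of the natural inclusion `I_i : V_i → ℝ^N`
    (R : ∀ i, (Fin N → ℝ) →ₗ[ℝ] V i)
    (hR : ∀ i (u : Fin N → ℝ) (v : V i),
      u ⬝ᵥ (v : Fin N → ℝ) = (R i u : Fin N → ℝ) ⬝ᵥ (v : Fin N → ℝ))
    -- the decomposition is `C_A`-stable (assumption (SD))
    (C : ℝ) (hC : 0 < C)
    (hstable : ∀ v : Fin N → ℝ, ∃ w : ∀ i, V i,
      v = ∑ i, (w i : Fin N → ℝ) ∧
      ∑ i, (Ai i (w i) : Fin N → ℝ) ⬝ᵥ (w i : Fin N → ℝ) ≤ C * (A.mulVec v ⬝ᵥ v))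
    (g : Fin N → ℝ) :
    A⁻¹.mulVec g ⬝ᵥ g ≤
      C * ∑ i, (Ai i (-(AiInv i (R i g))) : Fin N → ℝ) ⬝ᵥ ((-(AiInv i (R i g)) : V i) : Fin N → ℝ) := by
  -- positive semidefiniteness of each `A_i`
  have hpsd : ∀ i (x : V i), 0 ≤ (Ai i x : Fin N → ℝ) ⬝ᵥ (x : Fin N → ℝ) := by
    intro i x
    rcases eq_or_ne x 0 with rfl | hx
    · simp
    · exact (hAipos i x hx).le
  set v : Fin N → ℝ := A⁻¹.mulVec g with hv
  have hAv : A.mulVec v = g := by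
    rw [hv, Matrix.mulVec_mulVec,
      Matrix.mul_nonsing_inv A (isUnit_iff_ne_zero.mpr hA.det_pos.ne'), Matrix.one_mulVec]
  obtain ⟨w, hw, hwC⟩ := hstable v
  set u : ∀ i, V i := fun i => AiInv i (R i g) with hu
  have hAu : ∀ i, Ai i (u i) = R i g := fun i => (hAiInv i (R i g)).1
  set S : ℝ := A⁻¹.mulVec g ⬝ᵥ g with hS
  set T : ℝ := ∑ i, (Ai i (u i) : Fin N → ℝ) ⬝ᵥ (u i : Fin N → ℝ) with hT
  -- rewrite the RHS sum
  have hRHS : ∑ i, (Ai i (-(AiInv i (R i g))) : Fin N → ℝ) ⬝ᵥ ((-(AiInv i (R i g)) : V i) : Fin N → ℝ) = T := by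
    apply Finset.sum_congr rfl
    intro i _
    rw [map_neg]
    push_cast
    rw [neg_dotProduct, dotProduct_neg, neg_neg]
  rw [hRHS]
  -- the key identity: S = ∑ ⟨A_i u_i, w_i⟩
  have hAvv : A.mulVec v ⬝ᵥ v = S := by
    rw [hAv, hS, hv, dotProduct_comm]
  have hSsum : S = ∑ i, (Ai i (u i) : Fin N → ℝ) ⬝ᵥ (w i : Fin N → ℝ) := by
    have : S = g ⬝ᵥ v := by rw [hS, dotProduct_comm]
    rw [this, hw]
    have hdsum : ∀ (f : Fin J → Fin N → ℝ), g ⬝ᵥ ∑ i, f i = ∑ i, g ⬝ᵥ f i := by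
      intro f
      simp only [dotProduct, Finset.sum_apply, Finset.mul_sum]
      rw [Finset.sum_comm]
    rw [hdsum fun i => (w i : Fin N → ℝ)]
    exact Finset.sum_congr rfl fun i _ => by rw [hR i g (w i), hAu i]
  -- per-index Young inequality with parameter C
  have hyoung : ∀ i, (Ai i (u i) : Fin N → ℝ) ⬝ᵥ (w i : Fin N → ℝ) ≤
      (C / 2) * ((Ai i (u i) : Fin N → ℝ) ⬝ᵥ (u i : Fin N → ℝ)) +
      (1 / (2 * C)) * ((Ai i (w i) : Fin N → ℝ) ⬝ᵥ (w i : Fin N → ℝ)) := by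
    intro i
    have h0 := hpsd i (C • u i - w i)
    have hexp : (Ai i (C • u i - w i) : Fin N → ℝ) ⬝ᵥ ((C • u i - w i : V i) : Fin N → ℝ) =
        C * C * ((Ai i (u i) : Fin N → ℝ) ⬝ᵥ (u i : Fin N → ℝ))
        - 2 * C * ((Ai i (u i) : Fin N → ℝ) ⬝ᵥ (w i : Fin N → ℝ))
        + (Ai i (w i) : Fin N → ℝ) ⬝ᵥ (w i : Fin N → ℝ) := by
      have hsymm : (Ai i (w i) : Fin N → ℝ) ⬝ᵥ (u i : Fin N → ℝ)
          = (Ai i (u i) : Fin N → ℝ) ⬝ᵥ (w i : Fin N → ℝ) := by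
        rw [hAisym i (w i) (u i), dotProduct_comm]
      rw [map_sub, LinearMap.map_smul]
      push_cast
      simp only [sub_dotProduct, dotProduct_sub, smul_dotProduct, dotProduct_smul,
        smul_eq_mul, hsymm]
      ring
    rw [hexp] at h0
    have h2C : (0:ℝ) < 2 * C := by linarith
    rw [← mul_le_mul_iff_right₀ h2C]
    have hC' : C ≠ 0 := hC.ne'
    have : 2 * C * ((C / 2) * ((Ai i (u i) : Fin N → ℝ) ⬝ᵥ (u i : Fin N → ℝ)) +
        (1 / (2 * C)) * ((Ai i (w i) : Fin N → ℝ) ⬝ᵥ (w i : Fin N → ℝ)))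
        = C * C * ((Ai i (u i) : Fin N → ℝ) ⬝ᵥ (u i : Fin N → ℝ))
          + (Ai i (w i) : Fin N → ℝ) ⬝ᵥ (w i : Fin N → ℝ) := by
      field_simp
    rw [this]
    linarith
  have h1 : S ≤ (C / 2) * T + (1 / (2 * C)) * ∑ i, (Ai i (w i) : Fin N → ℝ) ⬝ᵥ (w i : Fin N → ℝ) := by
    calc S = ∑ i, (Ai i (u i) : Fin N → ℝ) ⬝ᵥ (w i : Fin N → ℝ) := hSsum
    _ ≤ ∑ i, ((C / 2) * ((Ai i (u i) : Fin N → ℝ) ⬝ᵥ (u i : Fin N → ℝ)) +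
        (1 / (2 * C)) * ((Ai i (w i) : Fin N → ℝ) ⬝ᵥ (w i : Fin N → ℝ))) :=
      Finset.sum_le_sum fun i _ => hyoung i
    _ = (C / 2) * T + (1 / (2 * C)) * ∑ i, (Ai i (w i) : Fin N → ℝ) ⬝ᵥ (w i : Fin N → ℝ) := by
      rw [Finset.sum_add_distrib, ← Finset.mul_sum, ← Finset.mul_sum, hT]
  have h2 : (1 / (2 * C)) * ∑ i, (Ai i (w i) : Fin N → ℝ) ⬝ᵥ (w i : Fin N → ℝ)
      ≤ (1 / (2 * C)) * (C * S) := by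
    apply mul_le_mul_of_nonneg_left _ (by positivity)
    rw [← hAvv]; exact hwC
  have h3 : (1 / (2 * C)) * (C * S) = S / 2 := by
    field_simp
  linarith
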